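/- With normalization p^{(θ)} = (Ω/π)^{1/4} e^{iθ/4} e^{-z_r²} where z_r = Re z, the bi-coherent states φ^{(θ)}(z;x) = p^{(θ)} exp(√(2Ω) e^{iθ/2} z x − (1/2) e^{iθ} Ω x²) and ψ^{(θ)}(z;x) = φ^{(-θ)}(z;x) satisfy ∫_ℝ conj(φ^{(θ)}(z;x)) ψ^{(θ)}(z;x) dx = 1 for all z ∈ ℂ and θ ∈ (-π/2, π/2). -/

import Mathlib

open MeasureTheory Complex

noncomputable section

/-- The normalized bi-coherent state `φ^{(θ)}(z;·)`. -/
def phiCoh (Ω θ : ℝ) (z : ℂ) : ℝ → ℂ := fun x =>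
  ((Ω / Real.pi) ^ ((1:ℝ)/4) : ℝ) *
    Complex.exp (Complex.I * θ / 4 - (z.re : ℂ) ^ 2
      + (Real.sqrt (2 * Ω) : ℂ) * Complex.exp (Complex.I * θ / 2) * z * x
      - (1/2) * Complex.exp (Complex.I * θ) * Ω * x ^ 2)

/-- normalization of the bi-coherent states, `⟨φ^{(θ)}(z;·), ψ^{(θ)}(z;·)⟩ = 1`,
where `ψ^{(θ)}(z;·) = φ^{(-θ)}(z;·)`. -/
theorem stmt11 (Ω θ : ℝ) (hΩ : 0 < Ω) (hθ : |θ| < Real.pi / 2) (z : ℂ) :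
    (∫ x : ℝ, starRingEnd ℂ (phiCoh Ω θ z x) * phiCoh Ω (-θ) z x) = 1 := by
  have hπ := Real.pi_pos
  obtain ⟨hθ1, hθ2⟩ := abs_lt.mp hθ
  have hcos : 0 < Real.cos θ := Real.cos_pos_of_mem_Ioo ⟨hθ1, hθ2⟩
  set b : ℂ := -Ω * Complex.exp (-Complex.I * θ) with hb
  set c : ℂ := (Real.sqrt (2 * Ω) : ℂ) * Complex.exp (-Complex.I * θ / 2) * (2 * z.re) with hc
  set d : ℂ := -Complex.I * θ / 2 - 2 * (z.re : ℂ) ^ 2 with hd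
  have harg : (-Complex.I * (θ:ℂ)) = ((-θ:ℝ):ℂ) * Complex.I := by push_cast; ring
  have hbre : b.re < 0 := by
    rw [hb, harg]
    simp only [neg_mul, neg_re, mul_re, ofReal_re, ofReal_im, zero_mul, sub_zero,
      Complex.exp_ofReal_mul_I_re, Real.cos_neg, neg_lt_zero]
    positivity
  have key : ∀ x : ℝ, starRingEnd ℂ (phiCoh Ω θ z x) * phiCoh Ω (-θ) z x
      = ((Ω / Real.pi) ^ ((1:ℝ)/2) : ℝ) * Complex.exp (b * x ^ 2 + c * x + d) := by
    intro x
    have hz : (starRingEnd ℂ) z = 2 * z.re - z := by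
      have h := Complex.add_conj z
      push_cast at h
      linear_combination h
    simp only [phiCoh, map_mul, Complex.conj_ofReal, ← Complex.exp_conj, map_sub, map_add,
      map_div₀, map_pow, map_mul, Complex.conj_I, map_one, map_ofNat, Complex.conj_ofReal]
    rw [mul_mul_mul_comm, ← Complex.exp_add]
    congr 1
    · rw [← Complex.ofReal_mul, ← Real.rpow_add (by positivity)]
      norm_num
    · rw [hz, hb, hc, hd, Real.sqrt_mul (by norm_num : (0:ℝ) ≤ 2)]
      push_cast
      ring_nf
  rw [integral_congr_ae (Filter.Eventually.of_forall key), integral_const_mul,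
    integral_cexp_quadratic hbre]
  have hΩ0 : (Ω:ℂ) ≠ 0 := by exact_mod_cast hΩ.ne'
  have hne : Complex.exp (-Complex.I * θ) ≠ 0 := Complex.exp_ne_zero _
  have hnb : -b = (Ω:ℂ) * Complex.exp (-Complex.I * θ) := by rw [hb]; ring
  set u : ℂ := (Real.log (Real.pi / Ω) : ℂ) + Complex.I * θ with hu
  have hw : (↑Real.pi / -b) = Complex.exp u := by
    rw [hnb, hu, Complex.exp_add, ← Complex.ofReal_exp, Real.exp_log (by positivity),
      div_eq_iff (by exact mul_ne_zero hΩ0 hne)]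
    push_cast
    rw [mul_assoc, mul_comm (Complex.exp _), mul_assoc, ← Complex.exp_add]
    field_simp
    simp
  have hcpow : (↑Real.pi / -b) ^ ((1:ℂ)/2) = Complex.exp (u * (1/2)) := by
    rw [hw, Complex.cpow_def_of_ne_zero (Complex.exp_ne_zero _), Complex.log_exp]
    · simp [hu]; linarith
    · simp [hu]; linarith [Real.pi_gt_three]
  have hs : ((Real.sqrt (2*Ω) : ℝ):ℂ)^2 = 2*(Ω:ℂ) := by
    rw [← Complex.ofReal_pow, Real.sq_sqrt (by positivity)]; push_cast; ring
  have he2 : Complex.exp (-Complex.I*θ/2)^2 = Complex.exp (-Complex.I*θ) := by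
    rw [sq, ← Complex.exp_add]; ring_nf
  have hc2 : c^2 = 8*(Ω:ℂ)*(z.re:ℂ)^2*Complex.exp (-Complex.I*θ) := by
    rw [hc, mul_pow, mul_pow, hs, he2]; ring
  have hdc : d - c^2/(4*b) = -Complex.I*θ/2 := by
    rw [hd, hc2, hb]
    field_simp
    ring
  rw [hcpow, hdc, mul_comm (Complex.exp _), ← Complex.exp_add]
  have hexp : -Complex.I*(θ:ℂ)/2 + u * (1/2) = ((Real.log (Real.pi / Ω) * (1/2) : ℝ) : ℂ) := by
    rw [hu]; push_cast; ring
  rw [hexp, ← Complex.ofReal_exp, ← Real.rpow_def_of_pos (by positivity),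
    ← Complex.ofReal_mul, ← Real.mul_rpow (by positivity) (by positivity)]
  have : (Ω / Real.pi) * (Real.pi / Ω) = 1 := by field_simp
  rw [this, Real.one_rpow, Complex.ofReal_one]
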